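/- For positive integers b_1, ..., b_m and complex parameters a_1, ..., a_n viewed as distinct symbols with a_i ∉ {0,1}, the operator ∂_{0,1} annihilates the multivariable block shuffle product: ∂_{0,1}(x_{b_1}⋯x_{b_m} ◇ e_{a_1}⋯e_{a_n}) = 0. -/

import Mathlib

noncomputable section
namespace BlockShuffle

abbrev AA : Type := MonoidAlgebra ℚ (FreeMonoid ℂ)
def wA (w : List ℂ) : AA := MonoidAlgebra.single (FreeMonoid.ofList w) 1
def iC : ℂ → ℂ := fun z => 1 - z
def Wword (t : ℂ) (b : ℕ) : List ℂ := List.ofFn fun i : Fin b => iC^[(i : ℕ)] t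
def Uel (b : ℕ) : AA := wA (Wword 0 b) + wA (Wword 1 b)
def iAs (s : ℕ) : AA →ₗ[ℚ] AA := MonoidAlgebra.mapDomainLinearMap ℚ ℚ (FreeMonoid.map (iC^[s]))

/-- The multivariable block shuffle product `◇ : 𝔛 × 𝒜⁺ → 𝒜⁺` on words, defined by the
recursion `x_{b₁}⋯x_{b_m} ◇ e_{a₁}⋯e_{a_n} = Σ_{k=1}^{m} (-1)^{k-1} e_{a₁}
U(b₁+⋯+b_k-1)·ι^{b₁+⋯+b_k-k}(x_{b_{k+1}}⋯x_{b_m} ◇ e_{a₁}⋯e_{a_n}) + Σ_{k=1}^{m} (-1)^k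
e_{a₁} U(b₁+⋯+b_k)·ι^{b₁+⋯+b_k-k}(x_{b_{k+1}}⋯x_{b_m} ◇ e_{a₂}⋯e_{a_n}) +
e_{a₁}(x_{b₁}⋯x_{b_m} ◇ e_{a₂}⋯e_{a_n})`, with `w ◇ (empty word) = 0` and
`x_∅ ◇ w = w`. -/
def mdsh : List ℕ → List ℂ → AA
  | [], [] => 0
  | [], a :: as => wA (a :: as)
  | _ :: _, [] => 0
  | b₁ :: bs, a :: as =>
      (∑ k ∈ Finset.range (b₁ :: bs).length,
        ((-1 : ℚ) ^ k) •
          (wA [a] * Uel (((b₁ :: bs).take (k + 1)).sum - 1) *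
            iAs (((b₁ :: bs).take (k + 1)).sum - (k + 1))
              (mdsh ((b₁ :: bs).drop (k + 1)) (a :: as)))) +
      (∑ k ∈ Finset.range (b₁ :: bs).length,
        ((-1 : ℚ) ^ (k + 1)) •
          (wA [a] * Uel (((b₁ :: bs).take (k + 1)).sum) *
            iAs (((b₁ :: bs).take (k + 1)).sum - (k + 1))
              (mdsh ((b₁ :: bs).drop (k + 1)) as))) +
      wA [a] * mdsh (b₁ :: bs) as
  termination_by u v => u.length + v.length
  decreasing_by all_goals simp [List.length_drop]; all_goals omega


open Classical in
/-- `Δ^{α,β}_{x,y} = 1` if `{α,β} ∈ {{x,y}, {1-x,1-y}}`, else `0`. -/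
def Delta (α β x y : ℂ) : ℚ :=
  if ({α, β} : Set ℂ) = {x, y} ∨ ({α, β} : Set ℂ) = {1 - x, 1 - y} then 1 else 0

/-- The operator `∂_{α,β}` on a basis word `e_{z₀} e_{z₁} ⋯ e_{z_{k+1}}`:
`Σ_{i=1}^{k} (Δ^{α,β}_{z_i,z_{i+1}} - Δ^{α,β}_{z_i,z_{i-1}}) e_{z₀}⋯ê_{z_i}⋯e_{z_{k+1}}`. -/
def pdW (α β : ℂ) (w : List ℂ) : AA :=
  ∑ i ∈ Finset.range w.length,
    if 1 ≤ i ∧ i + 1 < w.length then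
      (Delta α β (w.getD i 0) (w.getD (i + 1) 0) - Delta α β (w.getD i 0) (w.getD (i - 1) 0)) •
        wA (w.take i ++ w.drop (i + 1))
    else 0

/-- The linear operator `∂_{α,β}` on `𝒜`. -/
def pd (α β : ℂ) : AA →ₗ[ℚ] AA :=
  (Finsupp.lsum ℚ fun w => LinearMap.toSpanSingleton ℚ AA (pdW α β (FreeMonoid.toList w))) ∘ₗ
    (MonoidAlgebra.coeffLinearEquiv ℚ).toLinearMap


/-! ### Auxiliary lemmas for the proof -/

lemma wA_mul (u v : List ℂ) : wA u * wA v = wA (u ++ v) := by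
  simp [wA, MonoidAlgebra.single_mul_single, FreeMonoid.ofList_append]

lemma wA_nil : wA [] = 1 := rfl

lemma wA_cons (z : ℂ) (w : List ℂ) : wA (z :: w) = wA [z] * wA w := by rw [wA_mul]; rfl

lemma single_eq (g : FreeMonoid ℂ) (q : ℚ) :
    (MonoidAlgebra.single g q : AA) = q • wA (FreeMonoid.toList g) := by
  rw [wA, FreeMonoid.ofList_toList, MonoidAlgebra.smul_single, smul_eq_mul, mul_one]

lemma iC_invol (z : ℂ) : iC (iC z) = z := by simp [iC]
lemma iC_zero : iC 0 = 1 := by norm_num [iC]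
lemma iC_one : iC 1 = 0 := by norm_num [iC]

lemma Wword_zero (t : ℂ) : Wword t 0 = [] := by simp [Wword]

lemma Wword_succ (t : ℂ) (b : ℕ) : Wword t (b + 1) = t :: Wword (iC t) b := by
  simp [Wword, List.ofFn_succ, Function.iterate_succ_apply]

lemma Delta_left {z : ℂ} (hz0 : z ≠ 0) (hz1 : z ≠ 1) (x : ℂ) : Delta 0 1 z x = 0 := by
  rw [Delta, if_neg]
  rintro (h | h)
  · have : z ∈ ({0, 1} : Set ℂ) := h ▸ Set.mem_insert z {x}
    rcases this with h' | h' <;> simp_all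
  · have : 1 - z ∈ ({0, 1} : Set ℂ) := h ▸ Set.mem_insert (1 - z) {1 - x}
    simp only [Set.mem_insert_iff, Set.mem_singleton_iff] at this
    rcases this with h' | h'
    · exact hz1 (by linear_combination -h')
    · exact hz0 (by linear_combination -h')

lemma Delta_right {z : ℂ} (hz0 : z ≠ 0) (hz1 : z ≠ 1) (x : ℂ) : Delta 0 1 x z = 0 := by
  rw [Delta, if_neg]
  rintro (h | h)
  · have : z ∈ ({0, 1} : Set ℂ) := h ▸ Set.mem_insert_iff.mpr (Or.inr rfl)
    rcases this with h' | h' <;> simp_all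
  · have : 1 - z ∈ ({0, 1} : Set ℂ) := h ▸ Set.mem_insert_iff.mpr (Or.inr rfl)
    simp only [Set.mem_insert_iff, Set.mem_singleton_iff] at this
    rcases this with h' | h'
    · exact hz1 (by linear_combination -h')
    · exact hz0 (by linear_combination -h')

lemma Delta_pair {t : ℂ} (ht : t = 0 ∨ t = 1) : Delta 0 1 t (iC t) = 1 := by
  rcases ht with rfl | rfl
  · rw [Delta, if_pos]; left; norm_num [iC]
  · rw [Delta, if_pos]; left; norm_num [iC, Set.pair_comm]

lemma Delta_pair' {t : ℂ} (ht : t = 0 ∨ t = 1) : Delta 0 1 (iC t) t = 1 := by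
  rcases ht with rfl | rfl
  · rw [Delta, if_pos]; left; norm_num [iC, Set.pair_comm]
  · rw [Delta, if_pos]; left; norm_num [iC]

/-- One-sided word derivative with left context `l`; cannot remove the last letter. -/
def Gd : ℂ → List ℂ → AA
  | _, [] => 0
  | _, [_] => 0
  | l, z :: y :: w => (Delta 0 1 z y - Delta 0 1 z l) • wA (y :: w) + wA [z] * Gd z (y :: w)

/-- Full word derivative with left context `l` and right context `r`. -/
def Fd : ℂ → ℂ → List ℂ → AA
  | _, _, [] => 0
  | l, r, z :: u => (Delta 0 1 z (u.headD r) - Delta 0 1 z l) • wA u + wA [z] * Fd z r u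

lemma Gd_cons (l z : ℂ) (w : List ℂ) (hw : w ≠ []) :
    Gd l (z :: w) = (Delta 0 1 z (w.headD 0) - Delta 0 1 z l) • wA w + wA [z] * Gd z w := by
  cases w with
  | nil => exact absurd rfl hw
  | cons y v => rfl

lemma pdW_one (z : ℂ) : pdW 0 1 [z] = 0 := by simp [pdW]

lemma pdW_two (z y : ℂ) : pdW 0 1 [z, y] = 0 := by simp [pdW, Finset.sum_range_succ]

lemma pdW_cons (z y : ℂ) (v : List ℂ) (hv : v ≠ []) :
    pdW 0 1 (z :: y :: v) =
      (Delta 0 1 y (v.headD 0) - Delta 0 1 y z) • wA (z :: v) + wA [z] * pdW 0 1 (y :: v) := by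
  obtain ⟨v0, v', rfl⟩ : ∃ v0 v', v = v0 :: v' := by
    cases v with
    | nil => exact absurd rfl hv
    | cons a b => exact ⟨a, b, rfl⟩
  simp only [pdW, List.length_cons, Finset.mul_sum]
  conv_lhs => rw [Finset.sum_range_succ', Finset.sum_range_succ']
  conv_rhs => rw [Finset.sum_range_succ']
  have e1 : (1 ≤ 0 + 1 ∧ 0 + 1 + 1 < v'.length + 1 + 1 + 1) = True := eq_true (by omega)
  have e2 : (1 ≤ 0 ∧ 0 + 1 < v'.length + 1 + 1 + 1) = False := eq_false (by omega)
  have e3 : (1 ≤ 0 ∧ 0 + 1 < v'.length + 1 + 1) = False := eq_false (by omega)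
  simp only [e1, e2, e3, if_true, if_false, mul_zero, add_zero]
  have hb1 : ((z :: y :: v0 :: v').getD (0 + 1) 0) = y := rfl
  have hb2 : ((z :: y :: v0 :: v').getD (0 + 1 + 1) 0) = v0 := rfl
  have hb3 : ((z :: y :: v0 :: v').getD (0 + 1 - 1) 0) = z := rfl
  have hb4 : (List.take (0 + 1) (z :: y :: v0 :: v') ++ List.drop (0 + 1 + 1) (z :: y :: v0 :: v'))
      = z :: v0 :: v' := rfl
  have hb5 : (v0 :: v').headD 0 = v0 := rfl
  rw [hb1, hb2, hb3, hb4, hb5, add_comm]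
  congr 1
  refine Finset.sum_congr rfl fun i _ => ?_
  rw [mul_ite, mul_zero]
  split_ifs with h1 h2 h2
  · simp only [List.getD_cons_succ, List.take_succ_cons, List.drop_succ_cons, Nat.add_sub_cancel,
      List.cons_append]
    rw [wA_cons, mul_smul_comm]
  · exfalso; omega
  · exfalso; omega
  · rfl

lemma pdW_eq : ∀ (w : List ℂ) (z : ℂ), pdW 0 1 (z :: w) = wA [z] * Gd z w := by
  intro w
  induction w with
  | nil => intro z; rw [pdW_one, show Gd z [] = 0 from rfl, mul_zero]
  | cons y v ih =>
    intro z
    cases v with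
    | nil => rw [pdW_two, show Gd z [y] = 0 from rfl, mul_zero]
    | cons v0 v' =>
      rw [pdW_cons z y _ (by simp), ih y, Gd_cons z y (v0 :: v') (by simp), mul_add,
        mul_smul_comm, wA_cons z (v0 :: v')]

/-- Linear extension of `Gd l`. -/
def GLm (l : ℂ) : AA →ₗ[ℚ] AA :=
  (Finsupp.lsum ℚ fun w => LinearMap.toSpanSingleton ℚ AA (Gd l (FreeMonoid.toList w))) ∘ₗ
    (MonoidAlgebra.coeffLinearEquiv ℚ).toLinearMap

lemma GLm_single (l : ℂ) (w : List ℂ) : GLm l (wA w) = Gd l w := by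
  rw [GLm, wA, LinearMap.comp_apply, LinearEquiv.coe_coe, MonoidAlgebra.coeffLinearEquiv_apply,
    MonoidAlgebra.coeff_single]
  refine (Finsupp.lsum_single (S := ℚ)
    (fun w => LinearMap.toSpanSingleton ℚ AA (Gd l (FreeMonoid.toList w)))
    (FreeMonoid.ofList w) (1 : ℚ)).trans ?_
  rw [LinearMap.toSpanSingleton_apply, one_smul, FreeMonoid.toList_ofList]

lemma pd_single (α β : ℂ) (w : List ℂ) : pd α β (wA w) = pdW α β w := by
  rw [pd, wA, LinearMap.comp_apply, LinearEquiv.coe_coe, MonoidAlgebra.coeffLinearEquiv_apply,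
    MonoidAlgebra.coeff_single]
  refine (Finsupp.lsum_single (S := ℚ)
    (fun w => LinearMap.toSpanSingleton ℚ AA (pdW α β (FreeMonoid.toList w)))
    (FreeMonoid.ofList w) (1 : ℚ)).trans ?_
  rw [LinearMap.toSpanSingleton_apply, one_smul, FreeMonoid.toList_ofList]

lemma pd_mulA (z : ℂ) (y : AA) : pd 0 1 (wA [z] * y) = wA [z] * GLm z y := by
  induction y using MonoidAlgebra.induction_linear with
  | zero => simp
  | add f g hf hg => rw [mul_add, map_add, hf, hg, map_add, mul_add]
  | single g q =>
    rw [single_eq, mul_smul_comm, map_smul, map_smul, mul_smul_comm, wA_mul,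
      List.singleton_append, pd_single, pdW_eq, GLm_single]

lemma Gd_consA {a : ℂ} (ha0 : a ≠ 0) (ha1 : a ≠ 1) (l : ℂ) (w : List ℂ) :
    Gd l (a :: w) = wA [a] * Gd a w := by
  cases w with
  | nil => rw [show Gd l [a] = 0 from rfl, show Gd a [] = 0 from rfl, mul_zero]
  | cons y v =>
    rw [Gd_cons _ _ _ (by simp), Delta_left ha0 ha1, Delta_left ha0 ha1, sub_zero, zero_smul,
      zero_add]

lemma GLm_mulA {a : ℂ} (ha0 : a ≠ 0) (ha1 : a ≠ 1) (l : ℂ) (y : AA) :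
    GLm l (wA [a] * y) = wA [a] * GLm a y := by
  induction y using MonoidAlgebra.induction_linear with
  | zero => simp
  | add f g hf hg => rw [mul_add, map_add, hf, hg, map_add, mul_add]
  | single g q =>
    rw [single_eq, mul_smul_comm, map_smul, map_smul, mul_smul_comm, wA_mul,
      List.singleton_append, GLm_single, GLm_single, Gd_consA ha0 ha1]

lemma headD_append (u v : List ℂ) (d : ℂ) : (u ++ v).headD d = u.headD (v.headD d) := by
  cases u <;> rfl

lemma Gapp (l : ℂ) (u v : List ℂ) (hv : v ≠ []) :
    Gd l (u ++ v) = Fd l (v.headD 0) u * wA v + wA u * Gd (u.getLastD l) v := by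
  induction u generalizing l with
  | nil =>
    rw [List.nil_append, show Fd l (v.headD 0) [] = 0 from rfl, zero_mul, zero_add, wA_nil,
      one_mul, List.getLastD_nil]
  | cons z u ih =>
    have huv : u ++ v ≠ [] := by
      cases u <;> simp [hv]
    rw [List.cons_append, Gd_cons _ _ _ huv, ih z, headD_append,
      show Fd l (v.headD 0) (z :: u) =
        (Delta 0 1 z (u.headD (v.headD 0)) - Delta 0 1 z l) • wA u + wA [z] * Fd z (v.headD 0) u
        from rfl,
      List.getLastD_cons,
      ← wA_mul u v, wA_cons z u]
    rw [mul_add, add_mul, smul_mul_assoc, mul_assoc, mul_assoc]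
    abel

/-- Span of nonempty words with head `h`. -/
def Sh (h : ℂ) : Submodule ℚ AA :=
  Submodule.span ℚ {x | ∃ v : List ℂ, v ≠ [] ∧ v.headD 0 = h ∧ x = wA v}

lemma GLm_mulw (l h : ℂ) (u : List ℂ) {y : AA} (hy : y ∈ Sh h) :
    GLm l (wA u * y) = Fd l h u * y + wA u * GLm (u.getLastD l) y := by
  induction hy using Submodule.span_induction with
  | mem x hx =>
    obtain ⟨v, hv, hh, rfl⟩ := hx
    rw [wA_mul, GLm_single, GLm_single, ← hh]
    exact Gapp l u v hv
  | zero => simp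
  | add x x' hx hx' ihx ihx' =>
    rw [mul_add, map_add, ihx, ihx', map_add, mul_add, mul_add]
    abel
  | smul q x hx ihx =>
    rw [mul_smul_comm, map_smul, ihx, map_smul, smul_add, mul_smul_comm, mul_smul_comm]

lemma mulA_mem_Sh (a : ℂ) (y : AA) : wA [a] * y ∈ Sh a := by
  induction y using MonoidAlgebra.induction_linear with
  | zero => rw [mul_zero]; exact zero_mem _
  | add f g hf hg => rw [mul_add]; exact add_mem hf hg
  | single g q =>
    rw [single_eq, mul_smul_comm, ← wA_cons]
    exact Submodule.smul_mem _ _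
      (Submodule.subset_span ⟨a :: FreeMonoid.toList g, by simp, rfl, rfl⟩)

lemma Fd_W (r : ℂ) (hr0 : r ≠ 0) (hr1 : r ≠ 1) :
    ∀ (b : ℕ) (t l : ℂ), (t = 0 ∨ t = 1) →
      Fd l r (Wword t (b + 1)) =
        wA (Wword (iC t) b) - wA (Wword t b) - Delta 0 1 t l • wA (Wword (iC t) b) := by
  intro b
  induction b with
  | zero =>
    intro t l ht
    rw [Wword_succ, Wword_zero, Wword_zero,
      show Fd l r [t] = (Delta 0 1 t r - Delta 0 1 t l) • wA [] + wA [t] * Fd t r [] from rfl,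
      show Fd t r [] = 0 from rfl, mul_zero, add_zero,
      Delta_right hr0 hr1, wA_nil, zero_sub, neg_smul, sub_self, zero_sub]
  | succ n ih =>
    intro t l ht
    have hict : iC t = 0 ∨ iC t = 1 := by
      rcases ht with rfl | rfl
      · right; exact iC_zero
      · left; exact iC_one
    rw [Wword_succ,
      show Fd l r (t :: Wword (iC t) (n + 1)) =
        (Delta 0 1 t ((Wword (iC t) (n + 1)).headD r) - Delta 0 1 t l) • wA (Wword (iC t) (n + 1))
          + wA [t] * Fd t r (Wword (iC t) (n + 1)) from rfl,
      show (Wword (iC t) (n + 1)).headD r = iC t from by rw [Wword_succ]; rfl,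
      ih (iC t) t hict, iC_invol, Delta_pair ht, Delta_pair' ht, one_smul]
    rw [show wA (Wword t (n + 1)) = wA [t] * wA (Wword (iC t) n) from by
      rw [Wword_succ, wA_cons]]
    rw [mul_sub, mul_sub, sub_smul, one_smul]
    abel

lemma key {b : ℕ} {h l : ℂ} (hh0 : h ≠ 0) (hh1 : h ≠ 1) (hl0 : l ≠ 0) (hl1 : l ≠ 1)
    {y : AA} (hy : y ∈ Sh h) (hGL : ∀ l', GLm l' y = 0) :
    GLm l (Uel b * y) = 0 := by
  rw [Uel, add_mul, map_add, GLm_mulw l h _ hy, GLm_mulw l h _ hy, hGL, hGL, mul_zero, mul_zero,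
    add_zero, add_zero]
  cases b with
  | zero =>
    rw [Wword_zero, Wword_zero, show Fd l h [] = 0 from rfl, zero_mul, add_zero]
  | succ n =>
    rw [Fd_W h hh0 hh1 n 0 l (Or.inl rfl), Fd_W h hh0 hh1 n 1 l (Or.inr rfl),
      Delta_right hl0 hl1, Delta_right hl0 hl1, zero_smul, zero_smul, sub_zero, sub_zero,
      iC_zero, iC_one, sub_mul, sub_mul]
    abel

lemma iAs_mul (s : ℕ) (x y : AA) : iAs s (x * y) = iAs s x * iAs s y := by
  exact MonoidAlgebra.mapDomain_mul (FreeMonoid.map (iC^[s])) x y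

lemma iAs_wA (s : ℕ) (v : List ℂ) : iAs s (wA v) = wA (v.map (iC^[s])) := by
  have h1 : FreeMonoid.map (iC^[s]) (FreeMonoid.ofList v) = FreeMonoid.ofList (v.map (iC^[s])) := by
    rw [← FreeMonoid.ofList_toList (FreeMonoid.map (iC^[s]) (FreeMonoid.ofList v)),
      FreeMonoid.toList_map, FreeMonoid.toList_ofList]
  refine (MonoidAlgebra.mapDomainLinearMap_single (R := ℚ) (S := ℚ) (⇑(FreeMonoid.map (iC^[s])))
    (1 : ℚ) (FreeMonoid.ofList v)).trans ?_
  rw [h1, wA]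

lemma Wword_map (s : ℕ) (t : ℂ) (b : ℕ) :
    (Wword t b).map (iC^[s]) = Wword (iC^[s] t) b := by
  simp only [Wword, List.map_ofFn]
  congr 1
  funext i
  show iC^[s] (iC^[(i : ℕ)] t) = iC^[(i : ℕ)] (iC^[s] t)
  rw [← Function.iterate_add_apply, ← Function.iterate_add_apply, Nat.add_comm]

lemma iter01 (s : ℕ) :
    (iC^[s] 0 = 0 ∧ iC^[s] 1 = 1) ∨ (iC^[s] 0 = 1 ∧ iC^[s] 1 = 0) := by
  induction s with
  | zero => exact Or.inl ⟨rfl, rfl⟩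
  | succ n ih =>
    rcases ih with ⟨h0, h1⟩ | ⟨h0, h1⟩
    · refine Or.inr ⟨?_, ?_⟩
      · rw [Function.iterate_succ_apply', h0]; exact iC_zero
      · rw [Function.iterate_succ_apply', h1]; exact iC_one
    · refine Or.inl ⟨?_, ?_⟩
      · rw [Function.iterate_succ_apply', h0]; exact iC_one
      · rw [Function.iterate_succ_apply', h1]; exact iC_zero

lemma iAs_Uel (s b : ℕ) : iAs s (Uel b) = Uel b := by
  rw [Uel, map_add, iAs_wA, iAs_wA, Wword_map, Wword_map]
  rcases iter01 s with ⟨h0, h1⟩ | ⟨h0, h1⟩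
  · rw [h0, h1]
  · rw [h0, h1]; exact add_comm _ _

lemma ok_iter (s : ℕ) {z : ℂ} (h0 : z ≠ 0) (h1 : z ≠ 1) :
    iC^[s] z ≠ 0 ∧ iC^[s] z ≠ 1 := by
  induction s with
  | zero => exact ⟨h0, h1⟩
  | succ n ih =>
    rw [Function.iterate_succ_apply']
    refine ⟨fun h => ih.2 ?_, fun h => ih.1 ?_⟩
    · have h' : (1 : ℂ) - iC^[n] z = 0 := h
      linear_combination -h'
    · have h' : (1 : ℂ) - iC^[n] z = 1 := h
      linear_combination -h'

/-- Structured elements: `e_{a₁} U(b₁) e_{a₂} U(b₂) ⋯ e_c`. -/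
def gw : List (ℂ × ℕ) → ℂ → AA
  | [], c => wA [c]
  | (a, b) :: L, c => wA [a] * Uel b * gw L c

def hdc : List (ℂ × ℕ) → ℂ → ℂ
  | [], c => c
  | p :: _, _ => p.1

lemma gw_mem_Sh (L : List (ℂ × ℕ)) (c : ℂ) : gw L c ∈ Sh (hdc L c) := by
  cases L with
  | nil => exact Submodule.subset_span ⟨[c], by simp, rfl, rfl⟩
  | cons p L =>
    obtain ⟨a, b⟩ := p
    rw [show gw ((a, b) :: L) c = wA [a] * Uel b * gw L c from rfl, mul_assoc]
    exact mulA_mem_Sh a _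

lemma hdc_ne {L : List (ℂ × ℕ)} {c : ℂ} (hL : ∀ p ∈ L, p.1 ≠ 0 ∧ p.1 ≠ 1)
    (hc0 : c ≠ 0) (hc1 : c ≠ 1) : hdc L c ≠ 0 ∧ hdc L c ≠ 1 := by
  cases L with
  | nil => exact ⟨hc0, hc1⟩
  | cons p L => exact hL p (List.mem_cons_self)

lemma gw_GL : ∀ (L : List (ℂ × ℕ)) {c : ℂ}, (∀ p ∈ L, p.1 ≠ 0 ∧ p.1 ≠ 1) → c ≠ 0 → c ≠ 1 →
    ∀ l, GLm l (gw L c) = 0 := by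
  intro L
  induction L with
  | nil =>
    intro c _ hc0 hc1 l
    rw [show gw [] c = wA [c] from rfl, GLm_single, show Gd l [c] = 0 from rfl]
  | cons p L ih =>
    obtain ⟨a, b⟩ := p
    intro c hL hc0 hc1 l
    have ha := hL (a, b) (List.mem_cons_self)
    have hL' : ∀ p ∈ L, p.1 ≠ 0 ∧ p.1 ≠ 1 := fun p hp => hL p (List.mem_cons_of_mem _ hp)
    have hh := hdc_ne hL' hc0 hc1
    rw [show gw ((a, b) :: L) c = wA [a] * Uel b * gw L c from rfl, mul_assoc,
      GLm_mulA ha.1 ha.2,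
      key hh.1 hh.2 ha.1 ha.2 (gw_mem_Sh L c) (ih hL' hc0 hc1), mul_zero]

lemma gw_pd {L : List (ℂ × ℕ)} {c : ℂ} (hL : ∀ p ∈ L, p.1 ≠ 0 ∧ p.1 ≠ 1)
    (hc0 : c ≠ 0) (hc1 : c ≠ 1) : pd 0 1 (gw L c) = 0 := by
  cases L with
  | nil => rw [show gw [] c = wA [c] from rfl, pd_single, pdW_one]
  | cons p L =>
    obtain ⟨a, b⟩ := p
    have ha := hL (a, b) (List.mem_cons_self)
    have hL' : ∀ p ∈ L, p.1 ≠ 0 ∧ p.1 ≠ 1 := fun p hp => hL p (List.mem_cons_of_mem _ hp)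
    have hh := hdc_ne hL' hc0 hc1
    rw [show gw ((a, b) :: L) c = wA [a] * Uel b * gw L c from rfl, mul_assoc, pd_mulA,
      key hh.1 hh.2 ha.1 ha.2 (gw_mem_Sh L c) (gw_GL L hL' hc0 hc1), mul_zero]

/-- The submodule spanned by structured elements. -/
def MM : Submodule ℚ AA :=
  Submodule.span ℚ {x | ∃ (L : List (ℂ × ℕ)) (c : ℂ),
    (∀ p ∈ L, p.1 ≠ 0 ∧ p.1 ≠ 1) ∧ (c ≠ 0 ∧ c ≠ 1) ∧ x = gw L c}

lemma pd_MM {x : AA} (hx : x ∈ MM) : pd 0 1 x = 0 := by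
  induction hx using Submodule.span_induction with
  | mem x hx =>
    obtain ⟨L, c, hL, hc, rfl⟩ := hx
    exact gw_pd hL hc.1 hc.2
  | zero => exact map_zero _
  | add x y _ _ hx hy => rw [map_add, hx, hy, add_zero]
  | smul q x _ hx => rw [map_smul, hx, smul_zero]

lemma MM_mulAU {a : ℂ} (ha0 : a ≠ 0) (ha1 : a ≠ 1) (b : ℕ) {x : AA} (hx : x ∈ MM) :
    wA [a] * Uel b * x ∈ MM := by
  induction hx using Submodule.span_induction with
  | mem x hx =>
    obtain ⟨L, c, hL, hc, rfl⟩ := hx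
    refine Submodule.subset_span ⟨(a, b) :: L, c, ?_, hc, rfl⟩
    rintro p hp
    rcases List.mem_cons.mp hp with rfl | hp
    · exact ⟨ha0, ha1⟩
    · exact hL p hp
  | zero => rw [mul_zero]; exact zero_mem _
  | add x y _ _ hx hy => rw [mul_add]; exact add_mem hx hy
  | smul q x _ hx => rw [mul_smul_comm]; exact Submodule.smul_mem _ _ hx

lemma MM_mulA {a : ℂ} (ha0 : a ≠ 0) (ha1 : a ≠ 1) {x : AA} (hx : x ∈ MM) :
    wA [a] * x ∈ MM := by
  induction hx using Submodule.span_induction with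
  | mem x hx =>
    obtain ⟨L, c, hL, hc, rfl⟩ := hx
    have h2 : gw ((a, 0) :: L) c = (2 : ℚ) • (wA [a] * gw L c) := by
      show wA [a] * Uel 0 * gw L c = _
      rw [Uel, Wword_zero, Wword_zero, wA_nil, mul_add, mul_one, add_mul, two_smul]
    have h3 : wA [a] * gw L c = (2⁻¹ : ℚ) • gw ((a, 0) :: L) c := by
      rw [h2, smul_smul]; norm_num
    rw [h3]
    refine Submodule.smul_mem _ _ (Submodule.subset_span ⟨(a, 0) :: L, c, ?_, hc, rfl⟩)
    rintro p hp
    rcases List.mem_cons.mp hp with rfl | hp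
    · exact ⟨ha0, ha1⟩
    · exact hL p hp
  | zero => rw [mul_zero]; exact zero_mem _
  | add x y _ _ hx hy => rw [mul_add]; exact add_mem hx hy
  | smul q x _ hx => rw [mul_smul_comm]; exact Submodule.smul_mem _ _ hx

lemma iAs_gw (s : ℕ) : ∀ (L : List (ℂ × ℕ)) (c : ℂ),
    iAs s (gw L c) = gw (L.map fun p => (iC^[s] p.1, p.2)) (iC^[s] c) := by
  intro L
  induction L with
  | nil => intro c; rw [show gw [] c = wA [c] from rfl, iAs_wA]; rfl
  | cons p L ih =>
    obtain ⟨a, b⟩ := p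
    intro c
    rw [show gw ((a, b) :: L) c = wA [a] * Uel b * gw L c from rfl, iAs_mul, iAs_mul,
      iAs_Uel, iAs_wA, ih]
    rfl

lemma MM_iAs (s : ℕ) {x : AA} (hx : x ∈ MM) : iAs s x ∈ MM := by
  induction hx using Submodule.span_induction with
  | mem x hx =>
    obtain ⟨L, c, hL, hc, rfl⟩ := hx
    rw [iAs_gw]
    refine Submodule.subset_span ⟨_, _, ?_, ⟨(ok_iter s hc.1 hc.2).1, (ok_iter s hc.1 hc.2).2⟩, rfl⟩
    rintro p hp
    rw [List.mem_map] at hp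
    obtain ⟨q, hq, rfl⟩ := hp
    exact ok_iter s (hL q hq).1 (hL q hq).2
  | zero => rw [map_zero]; exact zero_mem _
  | add x y _ _ hx hy => rw [map_add]; exact add_mem hx hy
  | smul q x _ hx => rw [map_smul]; exact Submodule.smul_mem _ _ hx

lemma MM_wA : ∀ (v : List ℂ), (∀ z ∈ v, z ≠ 0 ∧ z ≠ 1) → v ≠ [] → wA v ∈ MM := by
  intro v
  induction v with
  | nil => intro _ h; exact absurd rfl h
  | cons z v ih =>
    intro hv _
    have hz := hv z (List.mem_cons_self)
    cases v with
    | nil => exact Submodule.subset_span ⟨[], z, by simp, hz, rfl⟩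
    | cons y w =>
      rw [wA_cons]
      exact MM_mulA hz.1 hz.2 (ih (fun u hu => hv u (List.mem_cons_of_mem _ hu)) (by simp))

lemma mdsh_mem : ∀ (N : ℕ) (bs : List ℕ) (as : List ℂ), bs.length + as.length ≤ N →
    (∀ z ∈ as, z ≠ 0 ∧ z ≠ 1) → mdsh bs as ∈ MM := by
  intro N
  induction N with
  | zero =>
    intro bs as hlen _
    have hbs : bs = [] := List.length_eq_zero_iff.mp (by omega)
    have has : as = [] := List.length_eq_zero_iff.mp (by omega)
    subst hbs; subst has
    rw [show mdsh [] [] = 0 from by rw [mdsh]]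
    exact zero_mem _
  | succ N ih =>
    intro bs as hlen has
    match bs, as with
    | [], [] =>
      rw [show mdsh [] [] = 0 from by rw [mdsh]]
      exact zero_mem _
    | [], a :: as' =>
      rw [show mdsh [] (a :: as') = wA (a :: as') from by rw [mdsh]]
      exact MM_wA _ has (by simp)
    | b₁ :: bs', [] =>
      rw [show mdsh (b₁ :: bs') [] = 0 from by rw [mdsh]]
      exact zero_mem _
    | b₁ :: bs', a :: as' =>
      rw [mdsh]
      have ha := has a (List.mem_cons_self)
      have has' : ∀ z ∈ as', z ≠ 0 ∧ z ≠ 1 := fun z hz => has z (List.mem_cons_of_mem _ hz)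
      simp only [List.length_cons] at hlen
      refine add_mem (add_mem
        (Submodule.sum_mem _ fun k _ => Submodule.smul_mem _ _
          (MM_mulAU ha.1 ha.2 _ (MM_iAs _ (ih _ _ ?_ has))))
        (Submodule.sum_mem _ fun k _ => Submodule.smul_mem _ _
          (MM_mulAU ha.1 ha.2 _ (MM_iAs _ (ih _ _ ?_ has')))))
        (MM_mulA ha.1 ha.2 (ih _ _ ?_ has'))
      · simp only [List.length_drop, List.length_cons]; omega
      · simp only [List.length_drop, List.length_cons]; omega
      · simp only [List.length_cons]; omega

/-- Lemma `AlgDerFormula_01`: `∂_{0,1}` annihilates the multivariable block shuffle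
product. -/
theorem pd01_mdsh (m n : ℕ) (hn : 1 ≤ n) (b : Fin m → ℕ) (hb : ∀ i, 1 ≤ b i)
    (a : Fin n → ℂ) (ha0 : ∀ i, a i ≠ 0) (ha1 : ∀ i, a i ≠ 1)
    (hne : ∀ i j, i ≠ j → a i ≠ a j) (hιne : ∀ i j, a i ≠ 1 - a j) :
    pd 0 1 (mdsh (List.ofFn b) (List.ofFn a)) = 0 := by
  refine pd_MM (mdsh_mem ((List.ofFn b).length + (List.ofFn a).length) _ _ le_rfl ?_)
  intro z hz
  rw [List.mem_ofFn] at hz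
  obtain ⟨i, rfl⟩ := hz
  exact ⟨ha0 i, ha1 i⟩

end BlockShuffle
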